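/- Let p = (p_m)_{m≥1} be a consistent classical source on the alphabet Fin d, let (e_1,…,e_d) be the standard orthonormal basis of ℂ^d, and let D_m := ∑_{x : Fin m → Fin d} p_m(x)·(e_{x(1)}e_{x(1)}† ⊗ ⋯ ⊗ e_{x(m)}e_{x(m)}†) be the associated diagonal density matrices. Then (D_m)_{m≥1} is a stationary quantum source if and only if p is stationary, and (D_m)_{m≥1} is an ergodic quantum source if and only if p is ergodic. -/

import Mathlib

open Matrix Finset Filter Topology
open scoped ComplexOrder

noncomputable section

/-- `Mat d m` is the algebra of operators on the `m`-fold tensor power of `ℂ^d`,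
realized as matrices indexed by words `Fin m → Fin d`. -/
abbrev Mat (d m : ℕ) : Type := Matrix (Fin m → Fin d) (Fin m → Fin d) ℂ

/-- Kronecker (tensor) product `A ⊗ B` of `A : Mat d m` and `B : Mat d i`. -/
def tens {d m i : ℕ} (A : Mat d m) (B : Mat d i) : Mat d (m + i) :=
  Matrix.of fun x y =>
    A (fun k => x (Fin.castAdd i k)) (fun k => y (Fin.castAdd i k)) *
    B (fun k => x (Fin.natAdd m k)) (fun k => y (Fin.natAdd m k))

/-- A quantum source: each `ρ m` (for `m ≥ 1`) is positive semidefinite with trace 1. -/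
def IsQSource (d : ℕ) (ρ : ∀ m, Mat d m) : Prop :=
  ∀ m, 1 ≤ m → (ρ m).PosSemidef ∧ (ρ m).trace = 1

/-- Consistency: `tr(ρ_m a) = tr(ρ_{m+i} (a ⊗ I^{⊗i}))`. -/
def QConsistent (d : ℕ) (ρ : ∀ m, Mat d m) : Prop :=
  ∀ m i, 1 ≤ m → 1 ≤ i → ∀ a : Mat d m,
    (ρ m * a).trace = (ρ (m + i) * tens a (1 : Mat d i)).trace

/-- Stationarity: `tr(ρ_m a) = tr(ρ_{i+m} (I^{⊗i} ⊗ a))`. -/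
def QStationary (d : ℕ) (ρ : ∀ m, Mat d m) : Prop :=
  ∀ m i, 1 ≤ m → 1 ≤ i → ∀ a : Mat d m,
    (ρ m * a).trace = (ρ (i + m) * tens (1 : Mat d i) a).trace

/-- Ergodicity: Cesàro averages of `tr(ρ_{m+i} (a ⊗ I^{⊗(i-m)} ⊗ b))` converge to
`tr(ρ_m a)·tr(ρ_m b)`. -/
def QErgodic (d : ℕ) (ρ : ∀ m, Mat d m) : Prop :=
  ∀ m, 1 ≤ m → ∀ a b : Mat d m,
    Tendsto (fun n : ℕ =>
        (n : ℂ)⁻¹ * ∑ i ∈ Finset.Icc m n,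
          (ρ (m + (i - m) + m) * tens (tens a (1 : Mat d (i - m))) b).trace)
      atTop (nhds ((ρ m * a).trace * (ρ m * b).trace))

/-- Weak mixing. -/
def QWeakMixing (d : ℕ) (ρ : ∀ m, Mat d m) : Prop :=
  ∀ m, 1 ≤ m → ∀ a b : Mat d m,
    Tendsto (fun n : ℕ =>
        (n : ℝ)⁻¹ * ∑ i ∈ Finset.Icc m n,
          ‖((ρ (m + (i - m) + m) * tens (tens a (1 : Mat d (i - m))) b).trace
            - (ρ m * a).trace * (ρ m * b).trace)‖)
      atTop (nhds 0)

/-- Strong mixing. -/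
def QStrongMixing (d : ℕ) (ρ : ∀ m, Mat d m) : Prop :=
  ∀ m, 1 ≤ m → ∀ a b : Mat d m,
    Tendsto (fun i : ℕ =>
        (ρ (m + (i - m) + m) * tens (tens a (1 : Mat d (i - m))) b).trace)
      atTop (nhds ((ρ m * a).trace * (ρ m * b).trace))

/-- The `m`-fold elementary tensor `A_{j 1} ⊗ ⋯ ⊗ A_{j m}` of Kraus operators. -/
def krausPow {d : ℕ} {J : Type} [Fintype J] (A : J → Matrix (Fin d) (Fin d) ℂ)
    {m : ℕ} (j : Fin m → J) : Mat d m :=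
  Matrix.of fun x y => ∏ k, A (j k) (x k) (y k)

/-- The induced map `E^{⊗m}` of a memoryless channel with Kraus operators `A`. -/
def channelPow {d : ℕ} {J : Type} [Fintype J] (A : J → Matrix (Fin d) (Fin d) ℂ)
    (m : ℕ) (σ : Mat d m) : Mat d m :=
  ∑ j : Fin m → J, krausPow A j * σ * (krausPow A j)ᴴ

/-- A classical source on alphabet `Fin d`: each `p m` (for `m ≥ 1`) is a
probability distribution on words of length `m`. -/
def IsCSource (d : ℕ) (p : ∀ m, (Fin m → Fin d) → ℝ) : Prop :=
  ∀ m, 1 ≤ m → (∀ x, 0 ≤ p m x) ∧ ∑ x, p m x = 1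

def CConsistent (d : ℕ) (p : ∀ m, (Fin m → Fin d) → ℝ) : Prop :=
  ∀ m i, 1 ≤ m → 1 ≤ i → ∀ x : Fin m → Fin d,
    p m x = ∑ y : Fin i → Fin d, p (m + i) (Fin.append x y)

def CStationary (d : ℕ) (p : ∀ m, (Fin m → Fin d) → ℝ) : Prop :=
  ∀ m i, 1 ≤ m → 1 ≤ i → ∀ x : Fin m → Fin d,
    p m x = ∑ y : Fin i → Fin d, p (i + m) (Fin.append y x)

def CErgodic (d : ℕ) (p : ∀ m, (Fin m → Fin d) → ℝ) : Prop :=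
  ∀ m, 1 ≤ m → ∀ x y : Fin m → Fin d,
    Tendsto (fun n : ℕ =>
        (n : ℝ)⁻¹ * ∑ i ∈ Finset.Icc m n,
          ∑ z : Fin (i - m) → Fin d, p (m + (i - m) + m) (Fin.append (Fin.append x z) y))
      atTop (nhds (p m x * p m y))

def CWeakMixing (d : ℕ) (p : ∀ m, (Fin m → Fin d) → ℝ) : Prop :=
  ∀ m, 1 ≤ m → ∀ x y : Fin m → Fin d,
    Tendsto (fun n : ℕ =>
        (n : ℝ)⁻¹ * ∑ i ∈ Finset.Icc m n,
          |(∑ z : Fin (i - m) → Fin d, p (m + (i - m) + m) (Fin.append (Fin.append x z) y))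
            - p m x * p m y|)
      atTop (nhds 0)

def CStrongMixing (d : ℕ) (p : ∀ m, (Fin m → Fin d) → ℝ) : Prop :=
  ∀ m, 1 ≤ m → ∀ x y : Fin m → Fin d,
    Tendsto (fun i : ℕ =>
        ∑ z : Fin (i - m) → Fin d, p (m + (i - m) + m) (Fin.append (Fin.append x z) y))
      atTop (nhds (p m x * p m y))

/-- The classically correlated state `∑_x p(x) · ψ_{x 1}ψ_{x 1}† ⊗ ⋯ ⊗ ψ_{x m}ψ_{x m}†`. -/
def clsState {d : ℕ} (ψ : Fin d → Fin d → ℂ) {m : ℕ} (pm : (Fin m → Fin d) → ℝ) : Mat d m :=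
  ∑ x : Fin m → Fin d, (pm x : ℂ) •
    Matrix.of (fun u v => ∏ k, ψ (x k) (u k) * star (ψ (x k) (v k)))

/-- The probability `⟨u_{x 1} ⊗ ⋯ ⊗ u_{x m}, ρ (u_{x 1} ⊗ ⋯ ⊗ u_{x m})⟩` of
measurement outcome `x` in the product basis built from `u`. -/
def measProb {d m : ℕ} (ρ : Mat d m) (u : Fin d → Fin d → ℂ) (x : Fin m → Fin d) : ℝ :=
  (∑ v : Fin m → Fin d, ∑ w : Fin m → Fin d,
    star (∏ k, u (x k) (v k)) * ρ v w * ∏ k, u (x k) (w k)).re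

/-- Von Neumann entropy (base-2) of a Hermitian matrix, via its eigenvalues;
junk value `0` for non-Hermitian input.  The convention `0·log₂ 0 = 0` holds
automatically since `Real.logb 2 0 = 0`. -/
def vnEntropy {n : Type} [Fintype n] [DecidableEq n] (ρ : Matrix n n ℂ) : ℝ :=
  if h : ρ.IsHermitian then -∑ k, h.eigenvalues k * Real.logb 2 (h.eigenvalues k) else 0

/-! The state built from the standard basis is the diagonal matrix `diagonal (p m)`, and the trace
of a diagonal matrix against `I^{⊗i} ⊗ a` or `a ⊗ I^{⊗j} ⊗ b` only sees the diagonals of `a` and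
`b`, weighted by the corresponding marginals of `p`. Since the functional `tr(D ·)` determines `D`,
and diagonal matrix units single out individual words, each quantum condition over all
observables is the classical condition word by word. -/

theorem sum_fin_append {M α : Type*} [AddCommMonoid M] [Fintype α] {m i : ℕ}
    (f : (Fin (m + i) → α) → M) :
    ∑ w, f w = ∑ u : Fin m → α, ∑ v : Fin i → α, f (Fin.append u v) := by
  rw [← (Fin.appendEquiv m i).sum_comp, Fintype.sum_prod_type]
  rfl

theorem trace_diagonal_mul {n R : Type*} [Fintype n] [DecidableEq n] [NonUnitalNonAssocSemiring R]
    (f : n → R) (a : Matrix n n R) :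
    (diagonal f * a).trace = ∑ x, f x * a x x := by
  simp [trace, diagonal_mul]

theorem trace_diagonal_mul_mul_trace_diagonal_mul {n : Type*} [Fintype n] [DecidableEq n]
    (f : n → ℝ) (a b : Matrix n n ℂ) :
    (diagonal (fun x => (f x : ℂ)) * a).trace * (diagonal (fun x => (f x : ℂ)) * b).trace
      = ∑ x, ∑ y, ((f x * f y : ℝ) : ℂ) * (a x x * b y y) := by
  rw [trace_diagonal_mul, trace_diagonal_mul, Finset.sum_mul_sum]
  push_cast
  refine Finset.sum_congr rfl fun x _ => Finset.sum_congr rfl fun y _ => by ring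

theorem tendsto_sum_mul_mul_iff {α ι κ : Type*} [Fintype ι] [Fintype κ] [DecidableEq ι]
    [DecidableEq κ] {l : Filter α} (F : α → ι → κ → ℝ) (G : ι → κ → ℝ) :
    (∀ (u : ι → ℂ) (v : κ → ℂ), Tendsto (fun n => ∑ x, ∑ y, (F n x y : ℂ) * (u x * v y)) l
        (𝓝 (∑ x, ∑ y, (G x y : ℂ) * (u x * v y)))) ↔
      ∀ x y, Tendsto (F · x y) l (𝓝 (G x y)) := by
  refine ⟨fun h x y => ?_, fun h u v => ?_⟩
  · simpa [Pi.single_apply, tendsto_ofReal_iff] using h (Pi.single x 1) (Pi.single y 1)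
  · exact tendsto_finsetSum _ fun x _ => tendsto_finsetSum _ fun y _ =>
      (tendsto_ofReal_iff.2 (h x y)).mul_const _

theorem tens_apply_append_append {d m i : ℕ} (A : Mat d m) (B : Mat d i)
    (u u' : Fin m → Fin d) (v v' : Fin i → Fin d) :
    tens A B (Fin.append u v) (Fin.append u' v') = A u u' * B v v' := by
  simp [tens]

theorem of_prod_stdBasis_eq_single {d m : ℕ} (x : Fin m → Fin d) :
    Matrix.of (fun u v : Fin m → Fin d => ∏ k,
        (if u k = x k then (1 : ℂ) else 0) * star (if v k = x k then (1 : ℂ) else 0))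
      = single x x 1 := by
  ext u v
  simp [single_apply, ← ite_and, Finset.prod_ite_zero, forall_and, ← funext_iff, eq_comm, and_comm]

theorem clsState_stdBasis {d m : ℕ} (pm : (Fin m → Fin d) → ℝ) :
    clsState (fun i k => if k = i then (1 : ℂ) else 0) pm = diagonal fun x => (pm x : ℂ) := by
  simp only [clsState, of_prod_stdBasis_eq_single, smul_single, smul_eq_mul, mul_one,
    sum_single_eq_diagonal]

theorem isQSource_diagonal_iff {d : ℕ} (p : ∀ m, (Fin m → Fin d) → ℝ) :
    IsQSource d (fun m => diagonal fun x => (p m x : ℂ)) ↔ IsCSource d p := by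
  refine forall₂_congr fun m _ => and_congr ?_ ?_
  · simp only [posSemidef_diagonal_iff, Complex.zero_le_real]
  · rw [trace_diagonal, ← Complex.ofReal_sum, Complex.ofReal_eq_one]

theorem trace_diagonal_mul_one_tens {d m i : ℕ} (q : (Fin (i + m) → Fin d) → ℝ) (a : Mat d m) :
    (diagonal (fun w => (q w : ℂ)) * tens (1 : Mat d i) a).trace
      = (diagonal (fun x => ((∑ y : Fin i → Fin d, q (Fin.append y x) : ℝ) : ℂ)) * a).trace := by
  rw [trace_diagonal_mul, trace_diagonal_mul, sum_fin_append, Finset.sum_comm]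
  simp [tens_apply_append_append, Finset.sum_mul]

theorem trace_diagonal_mul_tens_one_tens {d m j : ℕ} (q : (Fin (m + j + m) → Fin d) → ℝ)
    (a b : Mat d m) :
    (diagonal (fun w => (q w : ℂ)) * tens (tens a (1 : Mat d j)) b).trace
      = ∑ x, ∑ y, ((∑ z : Fin j → Fin d, q (Fin.append (Fin.append x z) y) : ℝ) : ℂ)
          * (a x x * b y y) := by
  rw [trace_diagonal_mul, sum_fin_append, sum_fin_append]
  refine Finset.sum_congr rfl fun x _ => ?_
  rw [Finset.sum_comm]
  simp [tens_apply_append_append, Finset.sum_mul]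

theorem qStationary_diagonal_iff {d : ℕ} (p : ∀ m, (Fin m → Fin d) → ℝ) :
    QStationary d (fun m => diagonal fun x => (p m x : ℂ)) ↔ CStationary d p := by
  refine forall₄_congr fun m i _ _ => ?_
  simp_rw [trace_diagonal_mul_one_tens, ← ext_iff_trace_mul_right, diagonal_injective.eq_iff,
    funext_iff, Complex.ofReal_inj]

theorem cesaro_trace_diagonal_mul_tens_one_tens {d m : ℕ} (p : ∀ m, (Fin m → Fin d) → ℝ)
    (a b : Mat d m) (n : ℕ) :
    (n : ℂ)⁻¹ * ∑ i ∈ Icc m n, (diagonal (fun w => (p (m + (i - m) + m) w : ℂ)) *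
        tens (tens a (1 : Mat d (i - m))) b).trace
      = ∑ x, ∑ y, (((n : ℝ)⁻¹ * ∑ i ∈ Icc m n, ∑ z : Fin (i - m) → Fin d,
          p (m + (i - m) + m) (Fin.append (Fin.append x z) y) : ℝ) : ℂ) * (a x x * b y y) := by
  simp_rw [trace_diagonal_mul_tens_one_tens, Finset.mul_sum]
  rw [Finset.sum_comm]
  refine Finset.sum_congr rfl fun x _ => ?_
  rw [Finset.sum_comm]
  refine Finset.sum_congr rfl fun y _ => ?_
  push_cast
  rw [Finset.sum_mul]
  refine Finset.sum_congr rfl fun i _ => ?_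
  rw [← Finset.mul_sum]
  ring

theorem qErgodic_diagonal_iff {d : ℕ} (p : ∀ m, (Fin m → Fin d) → ℝ) :
    QErgodic d (fun m => diagonal fun x => (p m x : ℂ)) ↔ CErgodic d p := by
  refine forall₂_congr fun m _ => ?_
  simp_rw [cesaro_trace_diagonal_mul_tens_one_tens, trace_diagonal_mul_mul_trace_diagonal_mul]
  rw [← tendsto_sum_mul_mul_iff]
  exact ⟨fun h u v => by simpa using h (diagonal u) (diagonal v), fun h a b => h a.diag b.diag⟩

theorem diagonal_source_stationary_ergodic_iff_general
    (d : ℕ)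
    (p : ∀ m, (Fin m → Fin d) → ℝ) (hp : IsCSource d p) :
    ((IsQSource d (fun m => clsState (fun i k => if k = i then (1 : ℂ) else 0) (p m)) ∧
        QStationary d (fun m => clsState (fun i k => if k = i then (1 : ℂ) else 0) (p m)))
      ↔ CStationary d p) ∧
    ((IsQSource d (fun m => clsState (fun i k => if k = i then (1 : ℂ) else 0) (p m)) ∧
        QErgodic d (fun m => clsState (fun i k => if k = i then (1 : ℂ) else 0) (p m)))
      ↔ CErgodic d p) := by
  simp only [clsState_stdBasis]
  have hQ := (isQSource_diagonal_iff p).2 hp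
  exact ⟨(and_iff_right hQ).trans (qStationary_diagonal_iff p),
    (and_iff_right hQ).trans (qErgodic_diagonal_iff p)⟩

/-- for the diagonal density matrices built from a consistent
classical source `p` on the standard basis, stationarity (resp. ergodicity) of
the quantum family is equivalent to stationarity (resp. ergodicity) of `p`. -/
theorem diagonal_source_stationary_ergodic_iff
    (d : ℕ) (hd : 2 ≤ d)
    (p : ∀ m, (Fin m → Fin d) → ℝ) (hp : IsCSource d p) (hc : CConsistent d p) :
    ((IsQSource d (fun m => clsState (fun i k => if k = i then (1 : ℂ) else 0) (p m)) ∧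
        QStationary d (fun m => clsState (fun i k => if k = i then (1 : ℂ) else 0) (p m)))
      ↔ CStationary d p) ∧
    ((IsQSource d (fun m => clsState (fun i k => if k = i then (1 : ℂ) else 0) (p m)) ∧
        QErgodic d (fun m => clsState (fun i k => if k = i then (1 : ℂ) else 0) (p m)))
      ↔ CErgodic d p) :=
  diagonal_source_stationary_ergodic_iff_general d p hp
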